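/- Applicative order does not absorb call-by-value: for the term t = (λx.y)(λk.k Ω) with pairwise distinct variables k, x, y, one has bv(t) = y and ao(y) = y, while ao diverges on t, i.e. there is no term N with ao(t) = N. Consequently the composed relation ao ∘ bv is not equal to ao. -/
import Mathlib


/-- Pure λ-calculus terms (de Bruijn representation). -/
inductive Tm : Type
  | var : Nat → Tm
  | lam : Tm → Tm
  | app : Tm → Tm → Tm
deriving DecidableEq

/-- Shift the free variables (those ≥ `c`) of a term up by one. -/
def lift (c : Nat) : Tm → Tm
  | .var n => if n < c then .var n else .var (n + 1)
  | .lam b => .lam (lift (c + 1) b)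
  | .app m n => .app (lift c m) (lift c n)

/-- Capture-avoiding substitution `[N/k]B` (de Bruijn). -/
def subst (N : Tm) (k : Nat) : Tm → Tm
  | .var n => if n < k then .var n else if n = k then N else .var (n - 1)
  | .lam b => .lam (subst (lift 0 N) (k + 1) b)
  | .app m n => .app (subst N k m) (subst N k n)
/-- Composition of big-step relations: `(Comp s2 s1) M N` iff
    there is `P` with `s1 M P` and `s2 P N`. -/
def Comp (s2 s1 : Tm → Tm → Prop) : Tm → Tm → Prop :=
  fun M N => ∃ P, s1 M P ∧ s2 P N

/-- The term `Ω = (λx.x x)(λx.x x)`. -/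
def Omega : Tm :=
  .app (.lam (.app (.var 0) (.var 0))) (.lam (.app (.var 0) (.var 0)))
/-- Call-by-value big-step relation. -/
inductive Bv : Tm → Tm → Prop
  | var : ∀ n, Bv (.var n) (.var n)
  | lam : ∀ B, Bv (.lam B) (.lam B)
  | beta : ∀ M N B N' B', Bv M (.lam B) → Bv N N' → Bv (subst N' 0 B) B' →
      Bv (.app M N) B'
  | neu : ∀ M N M' N', Bv M M' → (∀ B, M' ≠ .lam B) → Bv N N' →
      Bv (.app M N) (.app M' N')
/-- Applicative order big-step relation. -/
inductive Ao : Tm → Tm → Prop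
  | var : ∀ n, Ao (.var n) (.var n)
  | lam : ∀ B B', Ao B B' → Ao (.lam B) (.lam B')
  | beta : ∀ M N B N' B', Ao M (.lam B) → Ao N N' → Ao (subst N' 0 B) B' →
      Ao (.app M N) B'
  | neu : ∀ M N M' N', Ao M M' → (∀ B, M' ≠ .lam B) → Ao N N' →
      Ao (.app M N) (.app M' N')

lemma ao_not_omega : ∀ M N, Ao M N → M ≠ Omega := by
  intro M N h
  induction h with
  | var n => simp [Omega]
  | lam B B' h ih => simp [Omega]
  | beta M N B N' B' hM hN hS ihM ihN ihS =>
    intro he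
    rw [Omega] at he
    injection he with h1 h2
    subst h1; subst h2
    cases hM with
    | lam _ _ hB =>
      cases hB with
      | beta _ _ _ _ _ hv => cases hv
      | neu _ _ _ _ hv _ hv2 =>
        cases hv; cases hv2
        cases hN with
        | lam _ _ hB2 =>
          cases hB2 with
          | beta _ _ _ _ _ hv => cases hv
          | neu _ _ _ _ hv _ hv2 =>
            cases hv; cases hv2
            exact ihS (by simp [subst, Omega])
  | neu M N M' N' hM hne hN ihM ihN =>
    intro he
    rw [Omega] at he
    injection he with h1 h2
    subst h1
    cases hM
    exact hne _ rfl

lemma ao_t_diverges (y : Nat) :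
    ∀ N, ¬ Ao (.app (.lam (.var (y + 1))) (.lam (.app (.var 0) Omega))) N := by
  intro N h
  cases h with
  | beta _ _ B N' B' hM hN hS =>
    cases hN with
    | lam _ _ hB =>
      cases hB with
      | beta _ _ _ _ _ hv => cases hv
      | neu _ _ _ _ _ _ hO => exact ao_not_omega _ _ hO rfl
  | neu _ _ M' N' hM hne hN =>
    cases hM; exact hne _ rfl

/-- Applicative order does not absorb call-by-value: for
    `t = (λx.y)(λk.k Ω)`, `bv(t) = y` and `ao(y) = y`, while ao diverges
    on `t`; consequently `ao ∘ bv ≠ ao`. -/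
theorem ao_does_not_absorb_bv :
    (∀ y : Nat,
        Bv (.app (.lam (.var (y + 1))) (.lam (.app (.var 0) Omega))) (.var y) ∧
        Ao (.var y) (.var y) ∧
        ¬ ∃ N : Tm,
            Ao (.app (.lam (.var (y + 1))) (.lam (.app (.var 0) Omega))) N) ∧
    Comp Ao Bv ≠ Ao := by
  have hmain : ∀ y : Nat,
      Bv (.app (.lam (.var (y + 1))) (.lam (.app (.var 0) Omega))) (.var y) ∧
      Ao (.var y) (.var y) ∧
      ¬ ∃ N : Tm,
          Ao (.app (.lam (.var (y + 1))) (.lam (.app (.var 0) Omega))) N := by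
    intro y
    refine ⟨?_, Ao.var y, ?_⟩
    · have : subst (.lam (.app (.var 0) Omega)) 0 (.var (y+1)) = .var y := by
        simp [subst]
      exact Bv.beta _ _ _ _ _ (Bv.lam _) (Bv.lam _) (this ▸ Bv.var y)
    · rintro ⟨N, hN⟩
      exact ao_t_diverges y N hN
  refine ⟨hmain, ?_⟩
  intro heq
  obtain ⟨hbv, _, hdiv⟩ := hmain 0
  exact hdiv ⟨.var 0, heq ▸ ⟨.var 0, hbv, Ao.var 0⟩⟩
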